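/- arXiv:math/0210414 — 3 statements merged into one kernel-verified Lean document; each statement's English description precedes it below -/
import Mathlib

section
/- The 8×8 real matrix A(x₁,x₂,x₃), defined as the block-diagonal matrix with the 4×4 identity in the upper-left block and lower-right 4×4 block [[1−2X², −2x₁X, −2x₂X, −2x₃X],[2x₁X, 1−2X², 2x₃X, −2x₂X],[2x₂X, −2x₃X, 1−2X², 2x₁X],[2x₃X, 2x₂X, −2x₁X, 1−2X²]] where X = √(1−x₁²−x₂²−x₃²), is an orthogonal matrix with determinant 1 for every (x₁,x₂,x₃) in the closed unit ball of ℝ³. -/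
/-!
The lower-right block of `A` is the matrix of right multiplication by the quaternion
`p = (1 - 2X²) + 2X (x₁ i + x₂ j + x₃ k)`. Right multiplication by a quaternion `q` satisfies
`M Mᵀ = |q|² • 1` and `det M = |q|⁴`, and on the ball `X² = 1 - x₁² - x₂² - x₃²` gives
`|p|² = (1 - 2X²)² + 4X² (1 - X²) = 1`.
-/

noncomputable section

/-- The 8×8 matrix `A(x₁,x₂,x₃)` from the paper, with `X = √(1−x₁²−x₂²−x₃²)`. -/
def matA (x₁ x₂ x₃ : ℝ) : Matrix (Fin 8) (Fin 8) ℝ :=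
  let X := Real.sqrt (1 - x₁^2 - x₂^2 - x₃^2)
  Matrix.of ![
    ![1,0,0,0,0,0,0,0],
    ![0,1,0,0,0,0,0,0],
    ![0,0,1,0,0,0,0,0],
    ![0,0,0,1,0,0,0,0],
    ![0,0,0,0, 1-2*X^2, -2*x₁*X, -2*x₂*X, -2*x₃*X],
    ![0,0,0,0, 2*x₁*X, 1-2*X^2, 2*x₃*X, -2*x₂*X],
    ![0,0,0,0, 2*x₂*X, -2*x₃*X, 1-2*X^2, 2*x₁*X],
    ![0,0,0,0, 2*x₃*X, 2*x₂*X, -2*x₁*X, 1-2*X^2]]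

/-- The 8×8 matrix `B(y₁,y₂)` from the paper, with `Y = √(1−y₁²−y₂²)`. -/
def matB (y₁ y₂ : ℝ) : Matrix (Fin 8) (Fin 8) ℝ :=
  let Y := Real.sqrt (1 - y₁^2 - y₂^2)
  Matrix.of ![
    ![1,0,0,0,0,0,0,0],
    ![0,1,0,0,0,0,0,0],
    ![0,0, y₁, -y₂, -Y, 0, 0,0],
    ![0,0, y₂, y₁, 0, -Y, 0,0],
    ![0,0, Y, 0, y₁, y₂, 0,0],
    ![0,0, 0, Y, -y₂, y₁, 0,0],
    ![0,0,0,0,0,0,1,0],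
    ![0,0,0,0,0,0,0,1]]

/-- The 8×8 matrix `D(w₁,w₂)` from the paper, with `W = √(1−w₁²−w₂²)`. -/
def matD (w₁ w₂ : ℝ) : Matrix (Fin 8) (Fin 8) ℝ :=
  let W := Real.sqrt (1 - w₁^2 - w₂^2)
  Matrix.of ![
    ![w₁, -w₂, -W, 0, 0,0,0,0],
    ![w₂, w₁, 0, -W, 0,0,0,0],
    ![W, 0, w₁, w₂, 0,0,0,0],
    ![0, W, -w₂, w₁, 0,0,0,0],
    ![0,0,0,0,1,0,0,0],
    ![0,0,0,0,0,1,0,0],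
    ![0,0,0,0,0,0,1,0],
    ![0,0,0,0,0,0,0,1]]

/-- The companion matrix `D'(w₁,w₂)` from the paper. -/
def matD' (w₁ w₂ : ℝ) : Matrix (Fin 8) (Fin 8) ℝ :=
  let W := Real.sqrt (1 - w₁^2 - w₂^2)
  Matrix.of ![
    ![1,0,0,0,0,0,0,0],
    ![0,1,0,0,0,0,0,0],
    ![0,0,1,0,0,0,0,0],
    ![0,0,0,1,0,0,0,0],
    ![0,0,0,0, w₁, -w₂, W, 0],
    ![0,0,0,0, w₂, w₁, 0, -W],
    ![0,0,0,0, -W, 0, w₁, -w₂],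
    ![0,0,0,0, 0, W, w₂, w₁]]

end

open Matrix

namespace Matrix

variable {m n R : Type*} [Fintype m] [Fintype n] [DecidableEq m] [DecidableEq n] [CommRing R]

theorem fromBlocks_zero_mem_orthogonalGroup {A : Matrix m m R} {D : Matrix n n R}
    (hA : A ∈ orthogonalGroup m R) (hD : D ∈ orthogonalGroup n R) :
    fromBlocks A 0 0 D ∈ orthogonalGroup (m ⊕ n) R := by
  rw [mem_orthogonalGroup_iff] at hA hD ⊢
  simp [fromBlocks_transpose, fromBlocks_multiply, hA, hD]

theorem reindex_mem_orthogonalGroup (e : m ≃ n) {A : Matrix m m R}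
    (hA : A ∈ orthogonalGroup m R) : reindex e e A ∈ orthogonalGroup n R := by
  rw [mem_orthogonalGroup_iff] at hA ⊢
  rw [transpose_reindex, ← coe_reindexAlgEquiv ℤ, ← map_mul, hA, map_one]

end Matrix

/-- The matrix of right multiplication `x ↦ x * (a + b i + c j + d k)` on the quaternions, in the
basis `1, i, j, k`. -/
def quaternionRightMulMatrix {R : Type*} [Ring R] (a b c d : R) : Matrix (Fin 4) (Fin 4) R :=
  !![a, -b, -c, -d; b, a, d, -c; c, -d, a, b; d, c, -b, a]

section quaternionRightMulMatrix

variable {R : Type*} [CommRing R] (a b c d : R)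

theorem quaternionRightMulMatrix_mul_transpose :
    quaternionRightMulMatrix a b c d * (quaternionRightMulMatrix a b c d)ᵀ =
      (a ^ 2 + b ^ 2 + c ^ 2 + d ^ 2) • 1 := by
  ext i j
  fin_cases i <;> fin_cases j <;>
    simp [quaternionRightMulMatrix, Matrix.mul_apply, Fin.sum_univ_four] <;> ring

theorem det_quaternionRightMulMatrix :
    (quaternionRightMulMatrix a b c d).det = (a ^ 2 + b ^ 2 + c ^ 2 + d ^ 2) ^ 2 := by
  simp [quaternionRightMulMatrix, det_succ_row_zero, Fin.sum_univ_succ, Fin.succAbove]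
  ring

theorem quaternionRightMulMatrix_mem_orthogonalGroup (h : a ^ 2 + b ^ 2 + c ^ 2 + d ^ 2 = 1) :
    quaternionRightMulMatrix a b c d ∈ orthogonalGroup (Fin 4) R := by
  rw [mem_orthogonalGroup_iff, quaternionRightMulMatrix_mul_transpose, h, one_smul]

end quaternionRightMulMatrix

theorem matA_eq_reindex_fromBlocks (x₁ x₂ x₃ : ℝ) :
    let X := √(1 - x₁ ^ 2 - x₂ ^ 2 - x₃ ^ 2)
    matA x₁ x₂ x₃ = reindex finSumFinEquiv finSumFinEquiv
      (fromBlocks 1 0 0 (quaternionRightMulMatrix (1 - 2 * X ^ 2) (2 * x₁ * X) (2 * x₂ * X)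
        (2 * x₃ * X))) := by
  ext i j
  fin_cases i <;> fin_cases j <;>
    simp [matA, quaternionRightMulMatrix, finSumFinEquiv, Fin.addCases]

/-- `A(x₁,x₂,x₃)` is orthogonal with determinant 1 for every point of the
closed unit ball of `ℝ³`. -/
theorem stmt_0 (x₁ x₂ x₃ : ℝ) (h : x₁^2 + x₂^2 + x₃^2 ≤ 1) :
    matA x₁ x₂ x₃ ∈ Matrix.orthogonalGroup (Fin 8) ℝ ∧ (matA x₁ x₂ x₃).det = 1 := by
  set X := √(1 - x₁ ^ 2 - x₂ ^ 2 - x₃ ^ 2)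
  have hX : X ^ 2 = 1 - x₁ ^ 2 - x₂ ^ 2 - x₃ ^ 2 := Real.sq_sqrt (by linarith)
  have hnorm : (1 - 2 * X ^ 2) ^ 2 + (2 * x₁ * X) ^ 2 + (2 * x₂ * X) ^ 2 + (2 * x₃ * X) ^ 2 = 1 := by
    linear_combination 4 * X ^ 2 * hX
  rw [matA_eq_reindex_fromBlocks]
  refine ⟨reindex_mem_orthogonalGroup _ (fromBlocks_zero_mem_orthogonalGroup (one_mem _)
    (quaternionRightMulMatrix_mem_orthogonalGroup _ _ _ _ hnorm)), ?_⟩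
  rw [det_reindex_self, det_fromBlocks_zero₂₁, det_one, one_mul, det_quaternionRightMulMatrix,
    hnorm, one_pow]
end

section
/- With notation as above, if a = D(w)B(y)A(x)B(y)⁻¹D(w)⁻¹ e₀ and all parameters lie in the interiors of their discs (so X, Y, W > 0 and a₀ < 1), then 2·X²Y²W² = 1 − a₀, i.e., XYW = √((1−a₀)/2). -/
noncomputable section

/-- The basis vector `e₀ = (1,0,…,0)` (and the other standard basis vectors) of `ℝ⁸`. -/
def e8 (i : Fin 8) : Fin 8 → ℝ := fun j => if j = i then 1 else 0

/-- `φ₇(x,y,w) = D(w) B(y) A(x) B(y)⁻¹ D(w)⁻¹`. -/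
def phi7 (x₁ x₂ x₃ y₁ y₂ w₁ w₂ : ℝ) : Matrix (Fin 8) (Fin 8) ℝ :=
  matD w₁ w₂ * matB y₁ y₂ * matA x₁ x₂ x₃ * (matB y₁ y₂)⁻¹ * (matD w₁ w₂)⁻¹

/-- `a = D(w)B(y)A(x)B(y)⁻¹D(w)⁻¹ e₀ ∈ ℝ⁸`. -/
def avec (x₁ x₂ x₃ y₁ y₂ w₁ w₂ : ℝ) : Fin 8 → ℝ :=
  (phi7 x₁ x₂ x₃ y₁ y₂ w₁ w₂).mulVec (e8 0)



section AuxStmt5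

variable {α : Type*}

@[simp] lemma vec8_two' (a₀ a₁ a₂ a₃ a₄ a₅ a₆ a₇ : α) : ![a₀,a₁,a₂,a₃,a₄,a₅,a₆,a₇] (2:Fin 8) = a₂ := rfl
@[simp] lemma vec8_three' (a₀ a₁ a₂ a₃ a₄ a₅ a₆ a₇ : α) : ![a₀,a₁,a₂,a₃,a₄,a₅,a₆,a₇] (3:Fin 8) = a₃ := rfl
@[simp] lemma vec8_four' (a₀ a₁ a₂ a₃ a₄ a₅ a₆ a₇ : α) : ![a₀,a₁,a₂,a₃,a₄,a₅,a₆,a₇] (4:Fin 8) = a₄ := rfl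
@[simp] lemma vec8_five' (a₀ a₁ a₂ a₃ a₄ a₅ a₆ a₇ : α) : ![a₀,a₁,a₂,a₃,a₄,a₅,a₆,a₇] (5:Fin 8) = a₅ := rfl
@[simp] lemma vec8_six' (a₀ a₁ a₂ a₃ a₄ a₅ a₆ a₇ : α) : ![a₀,a₁,a₂,a₃,a₄,a₅,a₆,a₇] (6:Fin 8) = a₆ := rfl
@[simp] lemma vec8_seven' (a₀ a₁ a₂ a₃ a₄ a₅ a₆ a₇ : α) : ![a₀,a₁,a₂,a₃,a₄,a₅,a₆,a₇] (7:Fin 8) = a₇ := rfl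

@[simp] lemma vec8_mk0' (a₀ a₁ a₂ a₃ a₄ a₅ a₆ a₇ : α) (h : 0 < 8) : ![a₀,a₁,a₂,a₃,a₄,a₅,a₆,a₇] (⟨0,h⟩ : Fin 8) = a₀ := rfl
@[simp] lemma vec8_mk1' (a₀ a₁ a₂ a₃ a₄ a₅ a₆ a₇ : α) (h : 1 < 8) : ![a₀,a₁,a₂,a₃,a₄,a₅,a₆,a₇] (⟨1,h⟩ : Fin 8) = a₁ := rfl
@[simp] lemma vec8_mk2' (a₀ a₁ a₂ a₃ a₄ a₅ a₆ a₇ : α) (h : 2 < 8) : ![a₀,a₁,a₂,a₃,a₄,a₅,a₆,a₇] (⟨2,h⟩ : Fin 8) = a₂ := rfl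
@[simp] lemma vec8_mk3' (a₀ a₁ a₂ a₃ a₄ a₅ a₆ a₇ : α) (h : 3 < 8) : ![a₀,a₁,a₂,a₃,a₄,a₅,a₆,a₇] (⟨3,h⟩ : Fin 8) = a₃ := rfl
@[simp] lemma vec8_mk4' (a₀ a₁ a₂ a₃ a₄ a₅ a₆ a₇ : α) (h : 4 < 8) : ![a₀,a₁,a₂,a₃,a₄,a₅,a₆,a₇] (⟨4,h⟩ : Fin 8) = a₄ := rfl
@[simp] lemma vec8_mk5' (a₀ a₁ a₂ a₃ a₄ a₅ a₆ a₇ : α) (h : 5 < 8) : ![a₀,a₁,a₂,a₃,a₄,a₅,a₆,a₇] (⟨5,h⟩ : Fin 8) = a₅ := rfl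
@[simp] lemma vec8_mk6' (a₀ a₁ a₂ a₃ a₄ a₅ a₆ a₇ : α) (h : 6 < 8) : ![a₀,a₁,a₂,a₃,a₄,a₅,a₆,a₇] (⟨6,h⟩ : Fin 8) = a₆ := rfl
@[simp] lemma vec8_mk7' (a₀ a₁ a₂ a₃ a₄ a₅ a₆ a₇ : α) (h : 7 < 8) : ![a₀,a₁,a₂,a₃,a₄,a₅,a₆,a₇] (⟨7,h⟩ : Fin 8) = a₇ := rfl

/-- explicit inverse (= transpose) of `matB` -/
def matBinv (y₁ y₂ : ℝ) : Matrix (Fin 8) (Fin 8) ℝ :=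
  let Y := Real.sqrt (1 - y₁^2 - y₂^2)
  Matrix.of ![
    ![1,0,0,0,0,0,0,0],
    ![0,1,0,0,0,0,0,0],
    ![0,0, y₁, y₂, Y, 0, 0,0],
    ![0,0, -y₂, y₁, 0, Y, 0,0],
    ![0,0, -Y, 0, y₁, -y₂, 0,0],
    ![0,0, 0, -Y, y₂, y₁, 0,0],
    ![0,0,0,0,0,0,1,0],
    ![0,0,0,0,0,0,0,1]]

/-- explicit inverse (= transpose) of `matD` -/
def matDinv (w₁ w₂ : ℝ) : Matrix (Fin 8) (Fin 8) ℝ :=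
  let W := Real.sqrt (1 - w₁^2 - w₂^2)
  Matrix.of ![
    ![w₁, w₂, W, 0, 0,0,0,0],
    ![-w₂, w₁, 0, W, 0,0,0,0],
    ![-W, 0, w₁, -w₂, 0,0,0,0],
    ![0, -W, w₂, w₁, 0,0,0,0],
    ![0,0,0,0,1,0,0,0],
    ![0,0,0,0,0,1,0,0],
    ![0,0,0,0,0,0,1,0],
    ![0,0,0,0,0,0,0,1]]

set_option maxHeartbeats 2000000 in
lemma matB_inv_eq (y₁ y₂ : ℝ) (hy : y₁^2 + y₂^2 < 1) :
    (matB y₁ y₂)⁻¹ = matBinv y₁ y₂ := by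
  have hY : Real.sqrt (1 - y₁^2 - y₂^2) ^ 2 = 1 - y₁^2 - y₂^2 :=
    Real.sq_sqrt (by linarith)
  apply Matrix.inv_eq_right_inv
  ext i j
  fin_cases i <;> fin_cases j <;>
    simp only [matB, matBinv, Matrix.mul_apply, Fin.sum_univ_eight, Matrix.of_apply,
      Matrix.cons_val_zero, Matrix.cons_val_one, Matrix.head_cons,
      vec8_two', vec8_three', vec8_four', vec8_five', vec8_six', vec8_seven',
        vec8_mk0', vec8_mk1', vec8_mk2', vec8_mk3', vec8_mk4', vec8_mk5', vec8_mk6', vec8_mk7',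
      Matrix.one_apply] <;>
    norm_num [Fin.ext_iff] <;> nlinarith [hY]

set_option maxHeartbeats 2000000 in
lemma matD_inv_eq (w₁ w₂ : ℝ) (hw : w₁^2 + w₂^2 < 1) :
    (matD w₁ w₂)⁻¹ = matDinv w₁ w₂ := by
  have hW : Real.sqrt (1 - w₁^2 - w₂^2) ^ 2 = 1 - w₁^2 - w₂^2 :=
    Real.sq_sqrt (by linarith)
  apply Matrix.inv_eq_right_inv
  ext i j
  fin_cases i <;> fin_cases j <;>
    simp only [matD, matDinv, Matrix.mul_apply, Fin.sum_univ_eight, Matrix.of_apply,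
      Matrix.cons_val_zero, Matrix.cons_val_one, Matrix.head_cons,
      vec8_two', vec8_three', vec8_four', vec8_five', vec8_six', vec8_seven',
        vec8_mk0', vec8_mk1', vec8_mk2', vec8_mk3', vec8_mk4', vec8_mk5', vec8_mk6', vec8_mk7',
      Matrix.one_apply] <;>
    norm_num [Fin.ext_iff] <;> nlinarith [hW]

end AuxStmt5

/-- on the interiors of the discs, `2X²Y²W² = 1 − a₀`, i.e.
`XYW = √((1−a₀)/2)`. -/
theorem stmt_5 (x₁ x₂ x₃ y₁ y₂ w₁ w₂ : ℝ)
    (hx : x₁^2 + x₂^2 + x₃^2 < 1) (hy : y₁^2 + y₂^2 < 1) (hw : w₁^2 + w₂^2 < 1) :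
    let X := Real.sqrt (1 - x₁^2 - x₂^2 - x₃^2)
    let Y := Real.sqrt (1 - y₁^2 - y₂^2)
    let W := Real.sqrt (1 - w₁^2 - w₂^2)
    let a := avec x₁ x₂ x₃ y₁ y₂ w₁ w₂
    2 * X^2 * Y^2 * W^2 = 1 - a 0 ∧ X * Y * W = Real.sqrt ((1 - a 0) / 2) := by
  intro X Y W a
  have hX2 : X^2 = 1 - x₁^2 - x₂^2 - x₃^2 := Real.sq_sqrt (by linarith)
  have hY2 : Y^2 = 1 - y₁^2 - y₂^2 := Real.sq_sqrt (by linarith)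
  have hW2 : W^2 = 1 - w₁^2 - w₂^2 := Real.sq_sqrt (by linarith)
  have hXpos : 0 < X := Real.sqrt_pos.2 (by linarith)
  have hYpos : 0 < Y := Real.sqrt_pos.2 (by linarith)
  have hWpos : 0 < W := Real.sqrt_pos.2 (by linarith)
  have he8 : e8 0 = ![1, 0, 0, 0, 0, 0, 0, 0] := by
    funext j; fin_cases j <;> rfl
  have h1 : (matDinv w₁ w₂).mulVec (e8 0) = ![w₁, -w₂, -W, 0, 0, 0, 0, 0] := by
    rw [he8]
    funext i
    fin_cases i <;>
      simp only [matDinv, Matrix.mulVec, dotProduct, Fin.sum_univ_eight,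
        Matrix.of_apply, Matrix.cons_val_zero, Matrix.cons_val_one, Matrix.head_cons,
        vec8_two', vec8_three', vec8_four', vec8_five', vec8_six', vec8_seven',
        vec8_mk0', vec8_mk1', vec8_mk2', vec8_mk3', vec8_mk4', vec8_mk5', vec8_mk6', vec8_mk7'] <;>
      first | rfl | ring
  have h2 : (matBinv y₁ y₂).mulVec ![w₁, -w₂, -W, 0, 0, 0, 0, 0]
      = ![w₁, -w₂, -(y₁*W), y₂*W, Y*W, 0, 0, 0] := by
    funext i
    fin_cases i <;>
      simp only [matBinv, Matrix.mulVec, dotProduct, Fin.sum_univ_eight,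
        Matrix.of_apply, Matrix.cons_val_zero, Matrix.cons_val_one, Matrix.head_cons,
        vec8_two', vec8_three', vec8_four', vec8_five', vec8_six', vec8_seven',
        vec8_mk0', vec8_mk1', vec8_mk2', vec8_mk3', vec8_mk4', vec8_mk5', vec8_mk6', vec8_mk7'] <;>
      first | rfl | ring
  have h3 : (matA x₁ x₂ x₃).mulVec ![w₁, -w₂, -(y₁*W), y₂*W, Y*W, 0, 0, 0]
      = ![w₁, -w₂, -(y₁*W), y₂*W, Y*W - 2*X^2*Y*W, 2*x₁*X*Y*W, 2*x₂*X*Y*W, 2*x₃*X*Y*W] := by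
    funext i
    fin_cases i <;>
      simp only [matA, Matrix.mulVec, dotProduct, Fin.sum_univ_eight,
        Matrix.of_apply, Matrix.cons_val_zero, Matrix.cons_val_one, Matrix.head_cons,
        vec8_two', vec8_three', vec8_four', vec8_five', vec8_six', vec8_seven',
        vec8_mk0', vec8_mk1', vec8_mk2', vec8_mk3', vec8_mk4', vec8_mk5', vec8_mk6', vec8_mk7'] <;>
      first | rfl | ring
  have h4 : (matB y₁ y₂).mulVec
        ![w₁, -w₂, -(y₁*W), y₂*W, Y*W - 2*X^2*Y*W, 2*x₁*X*Y*W, 2*x₂*X*Y*W, 2*x₃*X*Y*W]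
      = ![w₁, -w₂, -(Y^2*W) + 2*X^2*Y^2*W - y₂^2*W - y₁^2*W, -(2*x₁*X*Y^2*W),
          -(2*y₁*X^2*Y*W) + 2*x₁*y₂*X*Y*W, 2*y₂*X^2*Y*W + 2*x₁*y₁*X*Y*W,
          2*x₂*X*Y*W, 2*x₃*X*Y*W] := by
    funext i
    fin_cases i <;>
      simp only [matB, Matrix.mulVec, dotProduct, Fin.sum_univ_eight,
        Matrix.of_apply, Matrix.cons_val_zero, Matrix.cons_val_one, Matrix.head_cons,
        vec8_two', vec8_three', vec8_four', vec8_five', vec8_six', vec8_seven',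
        vec8_mk0', vec8_mk1', vec8_mk2', vec8_mk3', vec8_mk4', vec8_mk5', vec8_mk6', vec8_mk7'] <;>
      first | rfl | ring
  have ha : a 0 = Y^2*W^2 - 2*X^2*Y^2*W^2 + w₂^2 + w₁^2 + y₂^2*W^2 + y₁^2*W^2 := by
    show (avec x₁ x₂ x₃ y₁ y₂ w₁ w₂) 0 = _
    rw [avec, phi7, matB_inv_eq y₁ y₂ hy, matD_inv_eq w₁ w₂ hw,
      ← Matrix.mulVec_mulVec, ← Matrix.mulVec_mulVec, ← Matrix.mulVec_mulVec,
      ← Matrix.mulVec_mulVec, h1, h2, h3, h4]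
    simp only [matD, Matrix.mulVec, dotProduct, Fin.sum_univ_eight,
      Matrix.of_apply, Matrix.cons_val_zero, Matrix.cons_val_one, Matrix.head_cons,
      vec8_two', vec8_three', vec8_four', vec8_five', vec8_six', vec8_seven',
        vec8_mk0', vec8_mk1', vec8_mk2', vec8_mk3', vec8_mk4', vec8_mk5', vec8_mk6', vec8_mk7']
    ring
  have key : 2 * X^2 * Y^2 * W^2 = 1 - a 0 := by
    rw [ha]; nlinarith [hY2, hW2]
  refine ⟨key, ?_⟩
  have h6 : (1 - a 0) / 2 = (X*Y*W)^2 := by rw [← key]; ring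
  rw [h6, Real.sqrt_sq (by positivity)]
end
end

section
/- With a = D(w)B(y)A(x)B(y)⁻¹D(w)⁻¹ e₀ and parameters in the open discs, the following identities hold: (1−a₀)² + a₁² = 4X²Y⁴W⁴(x₁² + X²); a₂² + a₃² = 4X²Y⁴W²(1 − W²)(x₁² + X²); a₄² + a₅² = 4X²Y²W²(1 − Y²)(x₁² + X²). -/
noncomputable section

@[simp] lemma cons_val_five' {α : Type*} {m : ℕ} (x : α) (u : Fin (m + 5) → α) :
    Matrix.vecCons x u 5 =
      Matrix.vecHead (Matrix.vecTail (Matrix.vecTail (Matrix.vecTail (Matrix.vecTail u)))) :=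
  rfl

@[simp] lemma cons_val_six' {α : Type*} {m : ℕ} (x : α) (u : Fin (m + 6) → α) :
    Matrix.vecCons x u 6 =
      Matrix.vecHead (Matrix.vecTail (Matrix.vecTail (Matrix.vecTail
        (Matrix.vecTail (Matrix.vecTail u))))) :=
  rfl

@[simp] lemma cons_val_seven' {α : Type*} {m : ℕ} (x : α) (u : Fin (m + 7) → α) :
    Matrix.vecCons x u 7 =
      Matrix.vecHead (Matrix.vecTail (Matrix.vecTail (Matrix.vecTail
        (Matrix.vecTail (Matrix.vecTail (Matrix.vecTail u)))))) :=
  rfl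

/-- Explicit transpose of `matB`. -/
def matBT (y₁ y₂ : ℝ) : Matrix (Fin 8) (Fin 8) ℝ :=
  let Y := Real.sqrt (1 - y₁^2 - y₂^2)
  Matrix.of ![
    ![1,0,0,0,0,0,0,0],
    ![0,1,0,0,0,0,0,0],
    ![0,0, y₁, y₂, Y, 0, 0,0],
    ![0,0, -y₂, y₁, 0, Y, 0,0],
    ![0,0, -Y, 0, y₁, -y₂, 0,0],
    ![0,0, 0, -Y, y₂, y₁, 0,0],
    ![0,0,0,0,0,0,1,0],
    ![0,0,0,0,0,0,0,1]]

/-- Explicit transpose of `matD`. -/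
def matDT (w₁ w₂ : ℝ) : Matrix (Fin 8) (Fin 8) ℝ :=
  let W := Real.sqrt (1 - w₁^2 - w₂^2)
  Matrix.of ![
    ![w₁, w₂, W, 0, 0,0,0,0],
    ![-w₂, w₁, 0, W, 0,0,0,0],
    ![-W, 0, w₁, -w₂, 0,0,0,0],
    ![0, -W, w₂, w₁, 0,0,0,0],
    ![0,0,0,0,1,0,0,0],
    ![0,0,0,0,0,1,0,0],
    ![0,0,0,0,0,0,1,0],
    ![0,0,0,0,0,0,0,1]]

lemma matB_inv (y₁ y₂ : ℝ) (h : 0 ≤ 1 - y₁^2 - y₂^2) :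
    (matB y₁ y₂)⁻¹ = matBT y₁ y₂ := by
  have hY : Real.sqrt (1 - y₁^2 - y₂^2)^2 = 1 - y₁^2 - y₂^2 := Real.sq_sqrt h
  apply Matrix.inv_eq_right_inv
  ext i j
  fin_cases i <;> fin_cases j <;>
    simp [-Matrix.vecCons_const, matB, matBT, Matrix.mul_apply, Fin.sum_univ_eight,
      Matrix.one_apply] <;>
    first
      | ring1
      | linear_combination hY
      | linear_combination -hY

lemma matD_inv (w₁ w₂ : ℝ) (h : 0 ≤ 1 - w₁^2 - w₂^2) :
    (matD w₁ w₂)⁻¹ = matDT w₁ w₂ := by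
  have hW : Real.sqrt (1 - w₁^2 - w₂^2)^2 = 1 - w₁^2 - w₂^2 := Real.sq_sqrt h
  apply Matrix.inv_eq_right_inv
  ext i j
  fin_cases i <;> fin_cases j <;>
    simp [-Matrix.vecCons_const, matD, matDT, Matrix.mul_apply, Fin.sum_univ_eight,
      Matrix.one_apply] <;>
    first
      | ring1
      | linear_combination hW
      | linear_combination -hW

lemma step1 (w₁ w₂ W : ℝ) (hWd : Real.sqrt (1 - w₁^2 - w₂^2) = W) :
    (matDT w₁ w₂).mulVec (e8 0) = ![w₁, -w₂, -W, 0, 0, 0, 0, 0] := by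
  funext i
  fin_cases i <;>
    simp [-Matrix.vecCons_const, matDT, e8, Matrix.mulVec, dotProduct,
      Fin.sum_univ_eight, hWd]

lemma step2 (y₁ y₂ w₁ w₂ Y W : ℝ) (hYd : Real.sqrt (1 - y₁^2 - y₂^2) = Y) :
    (matBT y₁ y₂).mulVec ![w₁, -w₂, -W, 0, 0, 0, 0, 0] =
      ![w₁, -w₂, -(y₁*W), y₂*W, Y*W, 0, 0, 0] := by
  funext i
  fin_cases i <;>
    simp [-Matrix.vecCons_const, matBT, Matrix.mulVec, dotProduct,
      Fin.sum_univ_eight, hYd] <;> ring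

lemma step3 (x₁ x₂ x₃ y₁ y₂ w₁ w₂ X Y W : ℝ)
    (hXd : Real.sqrt (1 - x₁^2 - x₂^2 - x₃^2) = X) :
    (matA x₁ x₂ x₃).mulVec ![w₁, -w₂, -(y₁*W), y₂*W, Y*W, 0, 0, 0] =
      ![w₁, -w₂, -(y₁*W), y₂*W, Y*W - 2*X^2*Y*W, 2*x₁*X*Y*W, 2*x₂*X*Y*W, 2*x₃*X*Y*W] := by
  funext i
  fin_cases i <;>
    simp [-Matrix.vecCons_const, matA, Matrix.mulVec, dotProduct,
      Fin.sum_univ_eight, hXd] <;> ring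

lemma step4 (x₁ x₂ x₃ y₁ y₂ w₁ w₂ X Y W : ℝ)
    (hYd : Real.sqrt (1 - y₁^2 - y₂^2) = Y) (hY : Y^2 = 1 - y₁^2 - y₂^2) :
    (matB y₁ y₂).mulVec
      ![w₁, -w₂, -(y₁*W), y₂*W, Y*W - 2*X^2*Y*W, 2*x₁*X*Y*W, 2*x₂*X*Y*W, 2*x₃*X*Y*W] =
      ![w₁, -w₂, -W + 2*X^2*Y^2*W, -(2*x₁*X*Y^2*W),
        2*X*Y*W*(x₁*y₂ - y₁*X), 2*X*Y*W*(y₂*X + x₁*y₁), 2*x₂*X*Y*W, 2*x₃*X*Y*W] := by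
  funext i
  fin_cases i <;>
    simp [-Matrix.vecCons_const, matB, Matrix.mulVec, dotProduct,
      Fin.sum_univ_eight, hYd] <;>
    first
      | ring1
      | linear_combination (-W) * hY

lemma step5 (x₁ x₂ x₃ y₁ y₂ w₁ w₂ X Y W : ℝ)
    (hWd : Real.sqrt (1 - w₁^2 - w₂^2) = W) (hW : W^2 = 1 - w₁^2 - w₂^2) :
    (matD w₁ w₂).mulVec
      ![w₁, -w₂, -W + 2*X^2*Y^2*W, -(2*x₁*X*Y^2*W),
        2*X*Y*W*(x₁*y₂ - y₁*X), 2*X*Y*W*(y₂*X + x₁*y₁), 2*x₂*X*Y*W, 2*x₃*X*Y*W] =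
      ![1 - 2*X^2*Y^2*W^2, 2*x₁*X*Y^2*W^2,
        2*X*Y^2*W*(w₁*X - x₁*w₂), -(2*X*Y^2*W*(w₂*X + x₁*w₁)),
        2*X*Y*W*(x₁*y₂ - y₁*X), 2*X*Y*W*(y₂*X + x₁*y₁), 2*x₂*X*Y*W, 2*x₃*X*Y*W] := by
  funext i
  fin_cases i <;>
    simp [-Matrix.vecCons_const, matD, Matrix.mulVec, dotProduct,
      Fin.sum_univ_eight, hWd] <;>
    first
      | ring1
      | linear_combination hW

lemma avec_eq (x₁ x₂ x₃ y₁ y₂ w₁ w₂ X Y W : ℝ)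
    (hx0 : 0 ≤ 1 - x₁^2 - x₂^2 - x₃^2) (hy0 : 0 ≤ 1 - y₁^2 - y₂^2)
    (hw0 : 0 ≤ 1 - w₁^2 - w₂^2)
    (hXd : Real.sqrt (1 - x₁^2 - x₂^2 - x₃^2) = X)
    (hYd : Real.sqrt (1 - y₁^2 - y₂^2) = Y)
    (hWd : Real.sqrt (1 - w₁^2 - w₂^2) = W) :
    avec x₁ x₂ x₃ y₁ y₂ w₁ w₂ =
      ![1 - 2*X^2*Y^2*W^2, 2*x₁*X*Y^2*W^2,
        2*X*Y^2*W*(w₁*X - x₁*w₂), -(2*X*Y^2*W*(w₂*X + x₁*w₁)),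
        2*X*Y*W*(x₁*y₂ - y₁*X), 2*X*Y*W*(y₂*X + x₁*y₁), 2*x₂*X*Y*W, 2*x₃*X*Y*W] := by
  have hY : Y^2 = 1 - y₁^2 - y₂^2 := hYd ▸ Real.sq_sqrt hy0
  have hW : W^2 = 1 - w₁^2 - w₂^2 := hWd ▸ Real.sq_sqrt hw0
  rw [avec, phi7, matB_inv y₁ y₂ hy0, matD_inv w₁ w₂ hw0, ← Matrix.mulVec_mulVec,
    ← Matrix.mulVec_mulVec, ← Matrix.mulVec_mulVec, ← Matrix.mulVec_mulVec,
    step1 w₁ w₂ W hWd, step2 y₁ y₂ w₁ w₂ Y W hYd,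
    step3 x₁ x₂ x₃ y₁ y₂ w₁ w₂ X Y W hXd,
    step4 x₁ x₂ x₃ y₁ y₂ w₁ w₂ X Y W hYd hY,
    step5 x₁ x₂ x₃ y₁ y₂ w₁ w₂ X Y W hWd hW]

/-- the three sum-of-squares identities for the components of `a`. -/
theorem stmt_6 (x₁ x₂ x₃ y₁ y₂ w₁ w₂ : ℝ)
    (hx : x₁^2 + x₂^2 + x₃^2 < 1) (hy : y₁^2 + y₂^2 < 1) (hw : w₁^2 + w₂^2 < 1) :
    let X := Real.sqrt (1 - x₁^2 - x₂^2 - x₃^2)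
    let Y := Real.sqrt (1 - y₁^2 - y₂^2)
    let W := Real.sqrt (1 - w₁^2 - w₂^2)
    let a := avec x₁ x₂ x₃ y₁ y₂ w₁ w₂
    (1 - a 0)^2 + (a 1)^2 = 4*X^2*Y^4*W^4*(x₁^2 + X^2) ∧
    (a 2)^2 + (a 3)^2 = 4*X^2*Y^4*W^2*(1 - W^2)*(x₁^2 + X^2) ∧
    (a 4)^2 + (a 5)^2 = 4*X^2*Y^2*W^2*(1 - Y^2)*(x₁^2 + X^2) := by
  intro X Y W a
  have hx0 : (0:ℝ) ≤ 1 - x₁^2 - x₂^2 - x₃^2 := by linarith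
  have hy0 : (0:ℝ) ≤ 1 - y₁^2 - y₂^2 := by linarith
  have hw0 : (0:ℝ) ≤ 1 - w₁^2 - w₂^2 := by linarith
  have hX : X^2 = 1 - x₁^2 - x₂^2 - x₃^2 := Real.sq_sqrt hx0
  have hY : Y^2 = 1 - y₁^2 - y₂^2 := Real.sq_sqrt hy0
  have hW : W^2 = 1 - w₁^2 - w₂^2 := Real.sq_sqrt hw0
  have ha : a = ![1 - 2*X^2*Y^2*W^2, 2*x₁*X*Y^2*W^2,
        2*X*Y^2*W*(w₁*X - x₁*w₂), -(2*X*Y^2*W*(w₂*X + x₁*w₁)),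
        2*X*Y*W*(x₁*y₂ - y₁*X), 2*X*Y*W*(y₂*X + x₁*y₁), 2*x₂*X*Y*W, 2*x₃*X*Y*W] :=
    avec_eq x₁ x₂ x₃ y₁ y₂ w₁ w₂ X Y W hx0 hy0 hw0 rfl rfl rfl
  have ha0 : a 0 = 1 - 2*X^2*Y^2*W^2 := by rw [ha]; rfl
  have ha1 : a 1 = 2*x₁*X*Y^2*W^2 := by rw [ha]; rfl
  have ha2 : a 2 = 2*X*Y^2*W*(w₁*X - x₁*w₂) := by rw [ha]; rfl
  have ha3 : a 3 = -(2*X*Y^2*W*(w₂*X + x₁*w₁)) := by rw [ha]; rfl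
  have ha4 : a 4 = 2*X*Y*W*(x₁*y₂ - y₁*X) := by rw [ha]; rfl
  have ha5 : a 5 = 2*X*Y*W*(y₂*X + x₁*y₁) := by rw [ha]; rfl
  refine ⟨?_, ?_, ?_⟩
  · rw [ha0, ha1]; ring
  · rw [ha2, ha3]; linear_combination (4*X^2*Y^2*Y^2*W^2*(X^2 + x₁^2)) * hW
  · rw [ha4, ha5]; linear_combination (4*X^2*Y^2*W^2*(X^2 + x₁^2)) * hY
end
end
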